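/- Let N ≥ 2 be a prime, {b_k} integers with |b_k| ≥ 2, {t_k} a bounded sequence of nonzero integers, and D_k = {0,...,N−1}t_k. Set s_k = τ_N(b_1⋯b_k) − τ_N(N t_k), b'_k = b_k/N^{τ_N(b_k)}, t'_k = t_k/N^{τ_N(t_k)}, and 𝐛_k = b'_1⋯b'_k. Then the zero set of the Fourier transform of the Cantor–Moran measure μ = ∗_{k≥1} δ_{(b_1⋯b_k)^{-1}D_k} equals the union over k ≥ 1 of the sets N^{s_k} 𝐛_k (ℤ \ Nℤ)/t'_k. -/

import Mathlib

open MeasureTheory Filter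
open scoped ENNReal Topology Real

/-- The uniform probability measure `δ_E` on a finite set `E ⊆ ℝ`. -/
noncomputable def unif (E : Finset ℝ) : Measure ℝ :=
  (E.card : ℝ≥0∞)⁻¹ • ∑ e ∈ E, Measure.dirac e

/-- Convolution of two measures on `ℝ`. -/
noncomputable def mconv (μ ν : Measure ℝ) : Measure ℝ :=
  (μ.prod ν).map fun p => p.1 + p.2

/-- The finite convolution `f 0 ∗ f 1 ∗ ⋯ ∗ f m`. -/
noncomputable def finConv (f : ℕ → Measure ℝ) : ℕ → Measure ℝ
  | 0 => f 0
  | m + 1 => mconv (finConv f m) (f (m + 1))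

/-- The Fourier transform `μ̂(ξ) = ∫ e^{2πiξx} dμ(x)` of a measure on `ℝ`. -/
noncomputable def ft (μ : Measure ℝ) (ξ : ℝ) : ℂ :=
  ∫ x, Complex.exp (2 * π * Complex.I * ξ * x) ∂μ

lemma norm_exp_mul_I_sub_one_le (x : ℝ) :
    ‖Complex.exp (x * Complex.I) - 1‖ ≤ |x| := by
  rw [Complex.exp_mul_I]
  have h1 : Complex.cos x + Complex.sin x * Complex.I - 1
      = ((Real.cos x - 1 : ℝ) : ℂ) + ((Real.sin x : ℝ) : ℂ) * Complex.I := by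
    rw [← Complex.ofReal_cos, ← Complex.ofReal_sin]; push_cast; ring
  rw [h1, Complex.norm_add_mul_I]
  have h2 : (Real.cos x - 1) ^ 2 + Real.sin x ^ 2 = 2 - 2 * Real.cos x := by
    have := Real.sin_sq_add_cos_sq x; nlinarith
  rw [h2]
  have h3 : 2 - 2 * Real.cos x ≤ x ^ 2 := by
    have := Real.one_sub_sq_div_two_le_cos (x := x); nlinarith
  calc Real.sqrt (2 - 2 * Real.cos x) ≤ Real.sqrt (x ^ 2) := Real.sqrt_le_sqrt h3
    _ = |x| := Real.sqrt_sq_eq_abs x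

noncomputable def expB (ξ : ℝ) : BoundedContinuousFunction ℝ ℂ :=
  BoundedContinuousFunction.ofNormedAddCommGroup
    (fun x => Complex.exp (2 * π * Complex.I * ξ * x))
    (by fun_prop) 1 (fun x => by
      have : (2 * (π:ℂ) * Complex.I * ξ * x) = ((2 * π * ξ * x : ℝ) : ℂ) * Complex.I := by
        push_cast; ring
      show ‖Complex.exp (2 * π * Complex.I * ξ * x)‖ ≤ 1
      rw [this, Complex.norm_exp_ofReal_mul_I])

lemma ft_eq_int_expB (ν : Measure ℝ) (ξ : ℝ) : ft ν ξ = ∫ x, expB ξ x ∂ν := rfl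

lemma unif_prob {E : Finset ℝ} (hE : E.Nonempty) : IsProbabilityMeasure (unif E) := by
  constructor
  rw [unif, Measure.smul_apply, Measure.finset_sum_apply]
  simp only [Measure.dirac_apply_of_mem (Set.mem_univ _)]
  rw [Finset.sum_const, nsmul_eq_mul, mul_one, smul_eq_mul,
    ENNReal.inv_mul_cancel (by simpa using hE.card_ne_zero) (by simp)]

lemma ft_unif (E : Finset ℝ) (ξ : ℝ) :
    ft (unif E) ξ = (E.card : ℂ)⁻¹ * ∑ e ∈ E, Complex.exp (2 * π * Complex.I * ξ * e) := by
  rw [ft_eq_int_expB, unif, integral_smul_measure,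
    integral_finset_sum_measure (fun e _ => (expB ξ).integrable _)]
  simp only [integral_dirac]
  have : ((E.card : ℝ≥0∞))⁻¹.toReal = ((E.card : ℝ))⁻¹ := by
    simp [ENNReal.toReal_inv]
  rw [this, Complex.real_smul]
  push_cast
  rfl

lemma mconv_prob (μ ν : Measure ℝ) [IsProbabilityMeasure μ] [IsProbabilityMeasure ν] :
    IsProbabilityMeasure (mconv μ ν) :=
  Measure.isProbabilityMeasure_map (f := fun p : ℝ × ℝ => p.1 + p.2) (by fun_prop)

lemma ft_mconv (μ ν : Measure ℝ) [IsProbabilityMeasure μ] [IsProbabilityMeasure ν] (ξ : ℝ) :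
    ft (mconv μ ν) ξ = ft μ ξ * ft ν ξ := by
  rw [ft, mconv, integral_map (by fun_prop) (Continuous.aestronglyMeasurable (by fun_prop))]
  have h : ∀ p : ℝ × ℝ, Complex.exp (2*π*Complex.I*ξ*(p.1+p.2 : ℝ))
      = Complex.exp (2*π*Complex.I*ξ*p.1) * Complex.exp (2*π*Complex.I*ξ*p.2) := by
    intro p
    rw [← Complex.exp_add]
    push_cast
    ring_nf
  simp only [h]
  exact integral_prod_mul (μ := μ) (ν := ν) (fun x => Complex.exp (2*π*Complex.I*ξ*x))
    (fun x => Complex.exp (2*π*Complex.I*ξ*x))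

lemma finConv_prob (f : ℕ → Measure ℝ) (hf : ∀ k, IsProbabilityMeasure (f k)) (m : ℕ) :
    IsProbabilityMeasure (finConv f m) := by
  induction m with
  | zero => exact hf 0
  | succ n ih =>
    have := hf (n + 1)
    exact mconv_prob _ _

lemma ft_finConv (f : ℕ → Measure ℝ) (hf : ∀ k, IsProbabilityMeasure (f k)) (m : ℕ) (ξ : ℝ) :
    ft (finConv f m) ξ = ∏ k ∈ Finset.range (m + 1), ft (f k) ξ := by
  induction m with
  | zero => simp [finConv]
  | succ n ih =>
    have h1 := finConv_prob f hf n
    have h2 := hf (n + 1)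
    rw [show finConv f (n+1) = mconv (finConv f n) (f (n+1)) from rfl,
      ft_mconv, ih]
    rw [Finset.prod_range_succ (fun k => ft (f k) ξ) (n+1)]

noncomputable def cosB (ξ : ℝ) : BoundedContinuousFunction ℝ ℝ :=
  BoundedContinuousFunction.ofNormedAddCommGroup (fun x => Real.cos (2 * π * ξ * x))
    (by fun_prop) 1 (fun x => by rw [Real.norm_eq_abs]; exact Real.abs_cos_le_one _)

noncomputable def sinB (ξ : ℝ) : BoundedContinuousFunction ℝ ℝ :=
  BoundedContinuousFunction.ofNormedAddCommGroup (fun x => Real.sin (2 * π * ξ * x))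
    (by fun_prop) 1 (fun x => by rw [Real.norm_eq_abs]; exact Real.abs_sin_le_one _)

lemma ft_eq_cos_sin (ν : Measure ℝ) [IsFiniteMeasure ν] (ξ : ℝ) :
    ft ν ξ = ((∫ x, cosB ξ x ∂ν : ℝ) : ℂ) + ((∫ x, sinB ξ x ∂ν : ℝ) : ℂ) * Complex.I := by
  rw [ft_eq_int_expB]
  have h : ∀ x : ℝ, expB ξ x = ((cosB ξ x : ℝ) : ℂ) + ((sinB ξ x : ℝ) : ℂ) * Complex.I := by
    intro x
    show Complex.exp (2 * π * Complex.I * ξ * x) = _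
    have hc : (2 * (π:ℂ) * Complex.I * ξ * x) = ((2 * π * ξ * x : ℝ) : ℂ) * Complex.I := by
      push_cast; ring
    rw [hc, Complex.exp_mul_I, ← Complex.ofReal_cos, ← Complex.ofReal_sin]
    rfl
  simp only [h]
  exact (integral_add (((cosB ξ).integrable ν).ofReal)
    ((((sinB ξ).integrable ν).ofReal).mul_const Complex.I)).trans
    (by rw [integral_mul_const, integral_ofReal]; congr 1; exact integral_ofReal)

lemma ft_tendsto {νs : ℕ → Measure ℝ} {μ : Measure ℝ} [∀ m, IsFiniteMeasure (νs m)]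
    [IsFiniteMeasure μ]
    (h : ∀ f : BoundedContinuousFunction ℝ ℝ,
      Tendsto (fun m => ∫ x, f x ∂νs m) atTop (𝓝 (∫ x, f x ∂μ))) (ξ : ℝ) :
    Tendsto (fun m => ft (νs m) ξ) atTop (𝓝 (ft μ ξ)) := by
  simp only [ft_eq_cos_sin]
  exact ((Complex.continuous_ofReal.tendsto _).comp (h (cosB ξ))).add
    (((Complex.continuous_ofReal.tendsto _).comp (h (sinB ξ))).mul_const _)

lemma two_pi_I_ne_zero' : (2 * ↑π * Complex.I : ℂ) ≠ 0 := by
  simp [Real.pi_ne_zero, Complex.I_ne_zero, Complex.ofReal_ne_zero]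

lemma exp_eq_one_iff' (y : ℝ) : Complex.exp (2 * π * Complex.I * y) = 1 ↔ ∃ m : ℤ, y = m := by
  rw [Complex.exp_eq_one_iff]
  constructor
  · rintro ⟨m, hm⟩
    refine ⟨m, ?_⟩
    have : (y : ℂ) * (2 * π * Complex.I) = (m : ℂ) * (2 * π * Complex.I) := by
      rw [← hm]; ring
    have := mul_right_cancel₀ two_pi_I_ne_zero' this
    exact_mod_cast this
  · rintro ⟨m, hm⟩
    exact ⟨m, by rw [hm]; push_cast; ring⟩

lemma phi_zero_iff (n : ℕ) (hn : 2 ≤ n) (r ξ : ℝ) (hr : r ≠ 0) :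
    (∑ j ∈ Finset.range n, Complex.exp (2 * π * Complex.I * ξ * (j * r))) = 0 ↔
      ∃ a : ℤ, ¬ (n : ℤ) ∣ a ∧ ξ = a / (n * r) := by
  have hn0 : (n : ℝ) ≠ 0 := by positivity
  set z := Complex.exp (2 * π * Complex.I * (ξ * r)) with hz
  have hzj : ∀ j : ℕ, Complex.exp (2 * π * Complex.I * ξ * (j * r)) = z ^ j := by
    intro j
    rw [hz, ← Complex.exp_nat_mul]
    congr 1
    push_cast; ring
  simp only [hzj]
  have hzn : z ^ n = Complex.exp (2 * π * Complex.I * (n * (ξ * r))) := by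
    rw [hz, ← Complex.exp_nat_mul]; congr 1; push_cast; ring
  constructor
  · intro h
    have hz1 : z ≠ 1 := by
      intro hz1
      simp only [hz1, one_pow, Finset.sum_const, Finset.card_range, nsmul_eq_mul, mul_one] at h
      exact hn0 (by exact_mod_cast h)
    rw [geom_sum_eq hz1, div_eq_zero_iff] at h
    have hzn1 : z ^ n = 1 := by
      rcases h with h | h
      · exact sub_eq_zero.mp h
      · exact absurd (sub_eq_zero.mp h) hz1
    have hzn' : z ^ n = Complex.exp (2 * π * Complex.I * ((n * ξ * r : ℝ) : ℂ)) := by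
      rw [hzn]; congr 1; push_cast; ring
    rw [hzn'] at hzn1
    obtain ⟨m, hm⟩ := (exp_eq_one_iff' _).mp hzn1
    refine ⟨m, ?_, ?_⟩
    · rintro ⟨c, rfl⟩
      apply hz1
      have hxr : ξ * r = c := by
        have : (n : ℝ) * (ξ * r) = (n : ℝ) * c := by push_cast at hm ⊢; linarith
        exact mul_left_cancel₀ hn0 this
      have : z = Complex.exp (2 * π * Complex.I * ((ξ * r : ℝ) : ℂ)) := by
        rw [hz]; congr 1; push_cast; ring
      rw [this]
      exact (exp_eq_one_iff' _).mpr ⟨c, hxr⟩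
    · rw [eq_div_iff (mul_ne_zero hn0 hr)]
      linarith
  · rintro ⟨a, hna, rfl⟩
    have hrc : (r : ℂ) ≠ 0 := Complex.ofReal_ne_zero.mpr hr
    have hn0c : (n : ℂ) ≠ 0 := Nat.cast_ne_zero.mpr (by omega)
    have hxr : (a / (n * r) : ℝ) * r = a / n := by field_simp
    have hz1 : z ≠ 1 := by
      intro hz1
      have : z = Complex.exp (2 * π * Complex.I * (((a / (n * r) : ℝ) * r : ℝ) : ℂ)) := by
        rw [hz]; congr 1; push_cast; ring
      rw [this] at hz1
      obtain ⟨m, hm⟩ := (exp_eq_one_iff' _).mp hz1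
      rw [hxr] at hm
      have : (a : ℝ) = n * m := by field_simp at hm; linarith
      exact hna ⟨m, by exact_mod_cast this⟩
    have hzn1 : z ^ n = 1 := by
      rw [hzn]
      have : (n : ℂ) * ((a / (n * r) : ℝ) * r) = ((a : ℝ) : ℂ) := by
        push_cast
        field_simp
      rw [show (2 * (π:ℂ) * Complex.I * (↑n * (↑(a / (↑n * r)) * ↑r))) = 2 * π * Complex.I * ((n:ℂ) * ((a / (n * r) : ℝ) * r)) by ring, this]
      exact (exp_eq_one_iff' _).mpr ⟨a, by norm_num⟩
    rw [geom_sum_eq hz1, hzn1, sub_self, zero_div]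

lemma norm_exp_mul_I_sub_one_le' (x : ℝ) :
    ‖Complex.exp (x * Complex.I) - 1‖ ≤ |x| := by
  rw [Complex.exp_mul_I]
  have h1 : Complex.cos x + Complex.sin x * Complex.I - 1
      = ((Real.cos x - 1 : ℝ) : ℂ) + ((Real.sin x : ℝ) : ℂ) * Complex.I := by
    rw [← Complex.ofReal_cos, ← Complex.ofReal_sin]; push_cast; ring
  rw [h1, Complex.norm_add_mul_I]
  have h2 : (Real.cos x - 1) ^ 2 + Real.sin x ^ 2 = 2 - 2 * Real.cos x := by
    have := Real.sin_sq_add_cos_sq x; nlinarith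
  rw [h2]
  have h3 : 2 - 2 * Real.cos x ≤ x ^ 2 := by
    have := Real.one_sub_sq_div_two_le_cos (x := x); nlinarith
  calc Real.sqrt (2 - 2 * Real.cos x) ≤ Real.sqrt (x ^ 2) := Real.sqrt_le_sqrt h3
    _ = |x| := Real.sqrt_sq_eq_abs x

lemma one_sub_phi_bound (n : ℕ) (hn : 1 ≤ n) (r ξ : ℝ) :
    ‖1 - (n:ℂ)⁻¹ * ∑ j ∈ Finset.range n, Complex.exp (2*π*Complex.I*ξ*(j*r))‖
      ≤ 2 * π * |ξ| * n * |r| := by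
  have hne : (n:ℂ) ≠ 0 := Nat.cast_ne_zero.mpr (by omega)
  have key : ∀ j ∈ Finset.range n,
      ‖1 - Complex.exp (2*π*Complex.I*ξ*(j*r))‖ ≤ 2 * π * |ξ| * n * |r| := by
    intro j hj
    have hx : (2*(π:ℂ)*Complex.I*ξ*(j*r)) = ((2*π*ξ*(j*r):ℝ):ℂ) * Complex.I := by
      push_cast; ring
    rw [← norm_neg, neg_sub, hx]
    refine le_trans (norm_exp_mul_I_sub_one_le' _) ?_
    have h1 : |(2*π*ξ*(j*r) : ℝ)| = 2 * π * (|ξ| * ((j:ℝ) * |r|)) := by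
      simp only [abs_mul, Nat.abs_cast, abs_two, abs_of_nonneg Real.pi_pos.le]
      ring
    rw [h1]
    have hjn : (j:ℝ) ≤ n := by exact_mod_cast (Finset.mem_range.mp hj).le
    nlinarith [mul_le_mul_of_nonneg_left (mul_le_mul_of_nonneg_right hjn (abs_nonneg r))
      (mul_nonneg (by positivity : (0:ℝ) ≤ 2*π) (abs_nonneg ξ))]
  have hsplit : (1:ℂ) - (n:ℂ)⁻¹ * ∑ j ∈ Finset.range n, Complex.exp (2*π*Complex.I*ξ*(j*r))
      = (n:ℂ)⁻¹ * ∑ j ∈ Finset.range n, (1 - Complex.exp (2*π*Complex.I*ξ*(j*r))) := by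
    rw [Finset.sum_sub_distrib, Finset.sum_const, Finset.card_range, nsmul_eq_mul, mul_one]
    rw [mul_sub, inv_mul_cancel₀ hne]
  rw [hsplit, norm_mul]
  have h2 : ‖(n:ℂ)⁻¹‖ = (n:ℝ)⁻¹ := by
    simp [map_inv₀]
  rw [h2]
  calc (n:ℝ)⁻¹ * ‖∑ j ∈ Finset.range n, (1 - Complex.exp (2*π*Complex.I*ξ*(j*r)))‖
      ≤ (n:ℝ)⁻¹ * ∑ j ∈ Finset.range n, ‖1 - Complex.exp (2*π*Complex.I*ξ*(j*r))‖ := by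
        gcongr
        exact norm_sum_le _ _
    _ ≤ (n:ℝ)⁻¹ * (n * (2 * π * |ξ| * n * |r|)) := by
        gcongr
        refine le_trans (Finset.sum_le_card_nsmul _ _ _ key) ?_
        simp [Finset.card_range, nsmul_eq_mul]
    _ = 2 * π * |ξ| * n * |r| := by field_simp
  
lemma prod_ge (s : Finset ℕ) (u ε : ℕ → ℝ) (h1 : ∀ k ∈ s, 1 - ε k ≤ u k)
    (h2 : ∀ k ∈ s, 0 ≤ ε k) (h3 : ∀ k ∈ s, 0 ≤ u k) (h4 : ∀ k ∈ s, u k ≤ 1) :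
    1 - ∑ k ∈ s, ε k ≤ ∏ k ∈ s, u k := by
  induction s using Finset.cons_induction with
  | empty => simp
  | cons a s ha ih =>
    rw [Finset.sum_cons, Finset.prod_cons]
    have ih' := ih (fun k hk => h1 k (Finset.mem_cons_of_mem hk))
      (fun k hk => h2 k (Finset.mem_cons_of_mem hk))
      (fun k hk => h3 k (Finset.mem_cons_of_mem hk))
      (fun k hk => h4 k (Finset.mem_cons_of_mem hk))
    have hp0 : (0:ℝ) ≤ ∏ k ∈ s, u k :=
      Finset.prod_nonneg (fun k hk => h3 k (Finset.mem_cons_of_mem hk))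
    have hp1 : ∏ k ∈ s, u k ≤ 1 :=
      Finset.prod_le_one (fun k hk => h3 k (Finset.mem_cons_of_mem hk))
        (fun k hk => h4 k (Finset.mem_cons_of_mem hk))
    have hσ0 : (0:ℝ) ≤ ∑ k ∈ s, ε k :=
      Finset.sum_nonneg (fun k hk => h2 k (Finset.mem_cons_of_mem hk))
    have hua := h1 a (Finset.mem_cons_self a s)
    have hε0 := h2 a (Finset.mem_cons_self a s)
    have hu0 := h3 a (Finset.mem_cons_self a s)
    nlinarith [mul_nonneg (sub_nonneg.mpr hua) hp0, mul_nonneg hε0 (sub_nonneg.mpr hp1)]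

lemma geo_sum (a : ℕ) : ∀ m, a ≤ m →
    ∑ k ∈ Finset.Ico a m, ((1:ℝ)/2)^(k+1) = (1/2)^a - (1/2)^m := by
  intro m
  induction m with
  | zero => intro h; interval_cases a; simp
  | succ m ih =>
    intro h
    rcases Nat.lt_or_ge a (m+1) with h' | h'
    · have ham : a ≤ m := by omega
      rw [Finset.sum_Ico_succ_top ham, ih ham, pow_succ]
      ring
    · have : a = m + 1 := by omega
      subst this
      simp


lemma padicValInt_prod {p : ℕ} [Fact p.Prime] (s : Finset ℕ) (g : ℕ → ℤ)
    (hg : ∀ i ∈ s, g i ≠ 0) :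
    padicValInt p (∏ i ∈ s, g i) = ∑ i ∈ s, padicValInt p (g i) := by
  induction s using Finset.cons_induction with
  | empty => simp [padicValInt.one]
  | cons a s ha ih =>
    rw [Finset.prod_cons, Finset.sum_cons,
      padicValInt.mul (hg a (Finset.mem_cons_self a s))
        (Finset.prod_ne_zero_iff.mpr fun i hi => hg i (Finset.mem_cons_of_mem hi)),
      ih (fun i hi => hg i (Finset.mem_cons_of_mem hi))]

lemma abs_exp_unit (ξ y : ℝ) (j : ℕ) :
    ‖Complex.exp (2 * π * Complex.I * ξ * (j * y))‖ = 1 := by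
  rw [show (2 * (π:ℂ) * Complex.I * ξ * (j * y)) = ((2 * π * ξ * (j * y) : ℝ) : ℂ) * Complex.I by
    push_cast; ring, Complex.norm_exp_ofReal_mul_I]

/-- Equation (3.5): let `N` be a prime, `|b k| ≥ 2`, `{t k}` a bounded sequence of
nonzero integers, `D k = {0,…,N−1} t k` (indices from `0`), and set
`s k = τ_N(b 0 ⋯ b k) − τ_N(N t k)`, `b' k = b k / N^{τ_N(b k)}`,
`t' k = t k / N^{τ_N(t k)}`, `𝐛 k = b' 0 ⋯ b' k`.  If `μ` is the Cantor–Moran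
measure, i.e. the weak limit of the finite convolutions
`δ_{b_0⁻¹D_0} ∗ ⋯ ∗ δ_{(b_0⋯b_m)⁻¹D_m}`, then the zero set of `μ̂` is
`⋃_k N^{s k} 𝐛_k (ℤ \ Nℤ) / t'_k`. -/
theorem stmt11 (N : ℕ) (hN : N.Prime) (b t : ℕ → ℤ)
    (hb : ∀ k, 2 ≤ |b k|) (ht : ∀ k, t k ≠ 0) (htbd : ∃ M : ℤ, ∀ k, |t k| ≤ M)
    (s : ℕ → ℤ)
    (hs : ∀ k, s k = (padicValInt N (∏ i ∈ Finset.range (k + 1), b i) : ℤ)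
        - (padicValInt N ((N : ℤ) * t k) : ℤ))
    (bp tp : ℕ → ℤ)
    (hbp : ∀ k, b k = (N : ℤ) ^ (padicValInt N (b k)) * bp k)
    (htp : ∀ k, t k = (N : ℤ) ^ (padicValInt N (t k)) * tp k)
    (Bb : ℕ → ℤ) (hBb : ∀ k, Bb k = ∏ i ∈ Finset.range (k + 1), bp i)
    (μ : Measure ℝ) (hμ : IsProbabilityMeasure μ)
    (hlim : ∀ f : BoundedContinuousFunction ℝ ℝ,
      Tendsto (fun m => ∫ x, f x ∂ (finConv (fun k =>
          unif ((Finset.range N).image fun j : ℕ =>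
            ((j : ℝ) * (t k : ℝ)) / ∏ i ∈ Finset.range (k + 1), (b i : ℝ))) m))
        atTop (𝓝 (∫ x, f x ∂ μ))) :
    {ξ : ℝ | ft μ ξ = 0} =
      ⋃ k : ℕ, {x : ℝ | ∃ m : ℤ, ¬ (N : ℤ) ∣ m ∧
        x = ((N : ℝ) ^ (s k) * (Bb k : ℝ) * (m : ℝ)) / (tp k : ℝ)} := by
  haveI : Fact N.Prime := ⟨hN⟩
  obtain ⟨M, hM⟩ := htbd
  have hN2 : 2 ≤ N := hN.two_le
  have hN0r : (N : ℝ) ≠ 0 := by positivity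
  set f : ℕ → Measure ℝ := fun k =>
    unif ((Finset.range N).image fun j : ℕ =>
      ((j : ℝ) * (t k : ℝ)) / ∏ i ∈ Finset.range (k + 1), (b i : ℝ)) with hf
  have hbne : ∀ i, b i ≠ 0 := by
    intro i h
    have := hb i
    rw [h] at this
    simp at this
  have hBrne : ∀ k, (∏ i ∈ Finset.range (k + 1), (b i : ℝ)) ≠ 0 :=
    fun k => Finset.prod_ne_zero_iff.mpr fun i _ => Int.cast_ne_zero.mpr (hbne i)
  set r : ℕ → ℝ := fun k => (t k : ℝ) / ∏ i ∈ Finset.range (k + 1), (b i : ℝ) with hrdef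
  have hrne : ∀ k, r k ≠ 0 :=
    fun k => div_ne_zero (Int.cast_ne_zero.mpr (ht k)) (hBrne k)
  have hinj : ∀ k, ∀ x ∈ Finset.range N, ∀ y ∈ Finset.range N,
      ((x : ℝ) * (t k : ℝ)) / ∏ i ∈ Finset.range (k + 1), (b i : ℝ)
        = ((y : ℝ) * (t k : ℝ)) / ∏ i ∈ Finset.range (k + 1), (b i : ℝ) → x = y := by
    intro k x _ y _ hxy
    rw [mul_div_assoc, mul_div_assoc] at hxy
    have := mul_right_cancel₀ (hrne k) hxy
    exact_mod_cast this
  have hprob : ∀ k, IsProbabilityMeasure (f k) := by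
    intro k
    apply unif_prob
    exact Finset.Nonempty.image ⟨0, Finset.mem_range.mpr (by omega)⟩ _
  haveI hfin : ∀ m, IsFiniteMeasure (finConv f m) := fun m => by
    haveI := finConv_prob f hprob m
    infer_instance
  -- the per-factor Fourier transforms
  have hFk : ∀ (ξ : ℝ) (k : ℕ), ft (f k) ξ
      = (N:ℂ)⁻¹ * ∑ j ∈ Finset.range N, Complex.exp (2 * π * Complex.I * ξ * (j * (r k : ℝ))) := by
    intro ξ k
    rw [hf, ft_unif, Finset.sum_image (hinj k),
      Finset.card_image_of_injOn (fun x hx y hy => hinj k x hx y hy), Finset.card_range]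
    congr 1
    refine Finset.sum_congr rfl fun j _ => ?_
    congr 1
    rw [hrdef]
    push_cast
    rw [mul_div_assoc]
  -- arithmetic identity
  have htpne : ∀ k, tp k ≠ 0 := by
    intro k h
    exact ht k (by rw [htp k, h, mul_zero])
  have harith : ∀ (k : ℕ) (a : ℤ), (a : ℝ) / ((N : ℝ) * r k)
      = ((N : ℝ) ^ (s k) * (Bb k : ℝ) * (a : ℝ)) / (tp k : ℝ) := by
    intro k a
    set V : ℕ := ∑ i ∈ Finset.range (k + 1), padicValInt N (b i) with hV
    have hprodint : (∏ i ∈ Finset.range (k + 1), b i) = (N : ℤ) ^ V * Bb k := by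
      rw [hBb, hV, ← Finset.prod_pow_eq_pow_sum, ← Finset.prod_mul_distrib]
      exact Finset.prod_congr rfl fun i _ => hbp i
    have hval : padicValInt N (∏ i ∈ Finset.range (k + 1), b i) = V :=
      padicValInt_prod _ _ (fun i _ => hbne i)
    have hNt : padicValInt N ((N : ℤ) * t k) = 1 + padicValInt N (t k) := by
      rw [padicValInt.mul (by exact_mod_cast hN.ne_zero) (ht k),
        padicValInt.self hN.one_lt]
    have hsk : s k = (V : ℤ) - (1 + padicValInt N (t k) : ℕ) := by
      rw [hs k, hval, hNt]
    have hzpow : (N : ℝ) ^ (s k) = (N : ℝ) ^ (V : ℕ) / (N : ℝ) ^ ((1 + padicValInt N (t k)) : ℕ) := by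
      rw [hsk, zpow_sub₀ hN0r, zpow_natCast, zpow_natCast]
    have hBreal : (∏ i ∈ Finset.range (k + 1), (b i : ℝ)) = (N : ℝ) ^ V * (Bb k : ℝ) := by
      rw [← Int.cast_prod, hprodint]
      push_cast
      ring
    have htreal : (t k : ℝ) = (N : ℝ) ^ (padicValInt N (t k)) * (tp k : ℝ) := by
      rw [← Int.cast_natCast (R := ℝ)]
      exact_mod_cast congrArg (Int.cast : ℤ → ℝ) (htp k)
    have hrk : r k = (t k : ℝ) / ∏ i ∈ Finset.range (k + 1), (b i : ℝ) := rfl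
    rw [hrk, hzpow, hBreal, htreal]
    have h1 : (N : ℝ) ^ V ≠ 0 := by positivity
    have h2 : (N : ℝ) ^ ((1 + padicValInt N (t k)) : ℕ) ≠ 0 := by positivity
    have h3 : (tp k : ℝ) ≠ 0 := Int.cast_ne_zero.mpr (htpne k)
    have h4 : (Bb k : ℝ) ≠ 0 := by
      refine Int.cast_ne_zero.mpr ?_
      rw [hBb]
      refine Finset.prod_ne_zero_iff.mpr fun i _ h => hbne i ?_
      rw [hbp i, h, mul_zero]
    field_simp
    ring
  ext ξ
  simp only [Set.mem_setOf_eq, Set.mem_iUnion]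
  -- characterize zero of the k-th factor
  have hFzero : ∀ k, (ft (f k) ξ = 0 ↔ ∃ a : ℤ, ¬ (N:ℤ) ∣ a ∧
      ξ = ((N : ℝ) ^ (s k) * (Bb k : ℝ) * (a : ℝ)) / (tp k : ℝ)) := by
    intro k
    rw [hFk ξ k, mul_eq_zero]
    have hNinv : ((N:ℂ))⁻¹ ≠ 0 := inv_ne_zero (Nat.cast_ne_zero.mpr (by omega))
    rw [or_iff_right hNinv, phi_zero_iff N hN2 (r k) ξ (hrne k)]
    constructor
    · rintro ⟨a, ha, rfl⟩
      exact ⟨a, ha, by rw [← harith k a]⟩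
    · rintro ⟨a, ha, rfl⟩
      exact ⟨a, ha, by rw [← harith k a]⟩
  -- convergence of partial products
  have hlim' : Tendsto (fun m => ft (finConv f m) ξ) atTop (𝓝 (ft μ ξ)) :=
    ft_tendsto hlim ξ
  have hP : ∀ m, ft (finConv f m) ξ = ∏ k ∈ Finset.range (m + 1), ft (f k) ξ :=
    fun m => ft_finConv f hprob m ξ
  constructor
  · -- zero of μ̂ gives a zero factor
    intro h0
    by_contra hcon
    push_neg at hcon
    have hFne : ∀ k, ft (f k) ξ ≠ 0 := by
      intro k hk
      obtain ⟨a, ha, hξ⟩ := (hFzero k).mp hk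
      exact (hcon k a ha) hξ
    -- bounds
    set C : ℝ := 2 * π * |ξ| * N * (max (M : ℝ) 1) with hC
    have hC0 : 0 ≤ C := by positivity
    have hrbd : ∀ k, |r k| ≤ (max (M : ℝ) 1) * (1/2)^(k+1) := by
      intro k
      have hrk : r k = (t k : ℝ) / ∏ i ∈ Finset.range (k + 1), (b i : ℝ) := rfl
      rw [hrk, abs_div]
      have hden : (2:ℝ)^(k+1) ≤ |∏ i ∈ Finset.range (k + 1), (b i : ℝ)| := by
        rw [Finset.abs_prod]
        calc (2:ℝ)^(k+1) = ∏ _i ∈ Finset.range (k+1), (2:ℝ) := by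
              rw [Finset.prod_const, Finset.card_range]
          _ ≤ ∏ i ∈ Finset.range (k+1), |(b i : ℝ)| := by
              refine Finset.prod_le_prod (fun _ _ => by norm_num) (fun i _ => ?_)
              rw [← Int.cast_abs]
              exact_mod_cast hb i
      have hnum : |(t k : ℝ)| ≤ max (M : ℝ) 1 := by
        refine le_trans ?_ (le_max_left _ _)
        rw [← Int.cast_abs]
        exact_mod_cast hM k
      calc |(t k : ℝ)| / |∏ i ∈ Finset.range (k + 1), (b i : ℝ)|
          ≤ (max (M : ℝ) 1) / (2:ℝ)^(k+1) :=
            div_le_div₀ (le_trans (by norm_num) (le_max_right (M:ℝ) 1)) hnum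
              (by positivity) hden
        _ = (max (M : ℝ) 1) * (1/2)^(k+1) := by
            rw [one_div, inv_pow, div_eq_mul_inv]
    have hε : ∀ k, ‖1 - ft (f k) ξ‖ ≤ C * (1/2)^(k+1) := by
      intro k
      rw [hFk ξ k]
      refine le_trans (one_sub_phi_bound N (by omega) (r k) ξ) ?_
      rw [hC]
      calc 2 * π * |ξ| * N * |r k|
          ≤ 2 * π * |ξ| * N * ((max (M:ℝ) 1) * (1/2)^(k+1)) :=
            mul_le_mul_of_nonneg_left (hrbd k) (by positivity)
        _ = 2 * π * |ξ| * N * (max (M:ℝ) 1) * (1/2)^(k+1) := by ring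
    have hFle1 : ∀ k, ‖ft (f k) ξ‖ ≤ 1 := by
      intro k
      rw [hFk ξ k, norm_mul]
      have h2 : ‖(N:ℂ)⁻¹‖ = (N:ℝ)⁻¹ := by simp
      have h3 : ‖∑ j ∈ Finset.range N,
          Complex.exp (2*π*Complex.I*ξ*(j * (r k : ℝ)))‖ ≤ N := by
        refine le_trans (norm_sum_le _ _) (le_of_eq ?_)
        rw [Finset.sum_congr rfl (fun j (_ : j ∈ Finset.range N) => abs_exp_unit ξ (r k) j),
          Finset.sum_const, Finset.card_range, nsmul_eq_mul, mul_one]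
      rw [h2]
      refine le_trans (mul_le_mul_of_nonneg_left h3 (by positivity)) ?_
      exact le_of_eq (inv_mul_cancel₀ hN0r)
    obtain ⟨K, hK⟩ := pow_unbounded_of_one_lt C (one_lt_two (α := ℝ))
    set A : ℝ := ∏ k ∈ Finset.range (K+1), ‖ft (f k) ξ‖ with hA
    have hPK : 0 < A :=
      Finset.prod_pos fun k _ => norm_pos_iff.mpr (hFne k)
    have hbound : ∀ m, K ≤ m → A / 2 ≤ ‖ft (finConv f m) ξ‖ := by
      intro m hm
      rw [hP m, ← Finset.prod_range_mul_prod_Ico _ (by omega : K + 1 ≤ m + 1), norm_mul,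
        norm_prod, norm_prod]
      have hIco : 1 - ∑ k ∈ Finset.Ico (K+1) (m+1), (C * (1/2)^(k+1))
          ≤ ∏ k ∈ Finset.Ico (K+1) (m+1), ‖ft (f k) ξ‖ := by
        refine prod_ge _ _ _ (fun k _ => ?_) (fun k _ => by positivity)
          (fun k _ => norm_nonneg _) (fun k _ => hFle1 k)
        have h := hε k
        have htri : (1:ℝ) ≤ ‖1 - ft (f k) ξ‖ + ‖ft (f k) ξ‖ := by
          have h4 := norm_add_le (1 - ft (f k) ξ) (ft (f k) ξ)
          simpa using h4
        linarith
      have hsum : ∑ k ∈ Finset.Ico (K+1) (m+1), (C * (1/2)^(k+1)) ≤ 1/2 := by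
        rw [← Finset.mul_sum, geo_sum (K+1) (m+1) (by omega)]
        have h1 : (1/2:ℝ)^(K+1) - (1/2)^(m+1) ≤ (1/2)^(K+1) :=
          sub_le_self _ (by positivity)
        calc C * ((1/2:ℝ)^(K+1) - (1/2)^(m+1)) ≤ C * (1/2)^(K+1) :=
              mul_le_mul_of_nonneg_left h1 hC0
          _ ≤ 2^K * (1/2)^(K+1) :=
              mul_le_mul_of_nonneg_right hK.le (by positivity)
          _ = 1/2 := by
              rw [one_div, inv_pow, pow_succ]
              field_simp
      have hIco2 : (1/2 : ℝ) ≤ ∏ k ∈ Finset.Ico (K+1) (m+1), ‖ft (f k) ξ‖ := by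
        linarith
      calc A / 2 = A * (1/2) := by ring
        _ ≤ A * ∏ k ∈ Finset.Ico (K+1) (m+1), ‖ft (f k) ξ‖ :=
              mul_le_mul_of_nonneg_left hIco2 hPK.le
    have habs0 : Tendsto (fun m => ‖ft (finConv f m) ξ‖) atTop (𝓝 0) := by
      have h5 := hlim'.norm
      rw [h0, norm_zero] at h5
      simpa using h5
    obtain ⟨m, hm1, hm2⟩ := ((habs0.eventually (gt_mem_nhds (half_pos hPK))).and
      (eventually_ge_atTop K)).exists
    exact absurd (hbound m hm2) (not_le.mpr hm1)
  · rintro ⟨k, a, ha, hξ⟩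
    have hFk0 : ft (f k) ξ = 0 := (hFzero k).mpr ⟨a, ha, hξ⟩
    have hPz : ∀ m ≥ k, ft (finConv f m) ξ = 0 := by
      intro m hm
      rw [hP]
      exact Finset.prod_eq_zero (Finset.mem_range.mpr (by omega)) hFk0
    have : Tendsto (fun m => ft (finConv f m) ξ) atTop (𝓝 0) := by
      refine Tendsto.congr' ?_ tendsto_const_nhds
      filter_upwards [eventually_ge_atTop k] with m hm
      exact (hPz m hm).symm
    exact tendsto_nhds_unique hlim' this
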